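/- arXiv:2306.16815 — 2 statements merged into one kernel-verified Lean document; each statement's English description precedes it below -/
import Mathlib

section
/- Let e : V → Σ* be an injective map such that for any two distinct X, Y ∈ V, e(X) is not a suffix of e(Y). If F, Q ∈ V* are sequences such that neither of F, Q is a suffix of the other (as sequences over V), then neither of e*(F), e*(Q) is a suffix of the other (as strings over Σ). -/
/-- The monoid homomorphism `e* : V* → Σ*` induced by `e : V → Σ*`. -/
def expand {V A : Type*} (e : V → List A) (F : List V) : List A := (F.map e).flatten

lemma expand_cons {V A : Type*} (e : V → List A) (X : V) (F : List V) :
    expand e (X :: F) = e X ++ expand e F := by simp [expand]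

lemma expand_reverse {V A : Type*} (e : V → List A) (F : List V) :
    (expand e F).reverse = expand (fun x => (e x).reverse) F.reverse := by
  induction F with
  | nil => simp [expand]
  | cons X F ih =>
    simp only [expand_cons, List.reverse_cons, List.reverse_append]
    rw [show expand (fun x => (e x).reverse) (F.reverse ++ [X]) =
        expand (fun x => (e x).reverse) F.reverse ++ (e X).reverse by simp [expand]]
    rw [← ih]

lemma main_prefix {V A : Type*} (e : V → List A)
    (hsf : ∀ X Y : V, X ≠ Y → ¬ e X <+: e Y)
    (F Q : List V) (h1 : ¬ F <+: Q) (h2 : ¬ Q <+: F) :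
    ¬ expand e F <+: expand e Q := by
  induction F generalizing Q with
  | nil => exact absurd (List.nil_prefix) h1
  | cons X F ih =>
    cases Q with
    | nil => exact absurd (List.nil_prefix) h2
    | cons Y Q =>
      intro h
      rw [expand_cons, expand_cons] at h
      by_cases hXY : X = Y
      · subst hXY
        have h' : expand e F <+: expand e Q :=
          (List.prefix_append_right_inj (e X)).mp h
        have hF : ¬ F <+: Q := fun hp => h1 (List.cons_prefix_cons.mpr ⟨rfl, hp⟩)
        have hQ : ¬ Q <+: F := fun hp => h2 (List.cons_prefix_cons.mpr ⟨rfl, hp⟩)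
        exact ih Q hF hQ h'
      · have hx : e X <+: e Y ++ expand e Q := (List.prefix_append _ _).trans h
        have hy : e Y <+: e Y ++ expand e Q := List.prefix_append _ _
        rcases List.prefix_or_prefix_of_prefix hx hy with hc | hc
        · exact hsf X Y hXY hc
        · exact hsf Y X (fun h => hXY h.symm) hc

/-- if `e : V → Σ*` is injective and its images are mutually non-suffix,
then `e*` preserves mutual non-suffixness of sequences over `V`. -/
theorem stmt_5 {V A : Type*} (e : V → List A)
    (he : Function.Injective e)
    (hsf : ∀ X Y : V, X ≠ Y → ¬ e X <:+ e Y)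
    (F Q : List V) (h1 : ¬ F <:+ Q) (h2 : ¬ Q <:+ F) :
    ¬ expand e F <:+ expand e Q ∧ ¬ expand e Q <:+ expand e F := by
  have hsf' : ∀ X Y : V, X ≠ Y → ¬ (e X).reverse <+: (e Y).reverse := by
    intro X Y hXY h
    exact hsf X Y hXY (List.reverse_prefix.mp h)
  constructor
  · intro h
    rw [← List.reverse_prefix, expand_reverse, expand_reverse] at h
    exact main_prefix _ hsf' F.reverse Q.reverse
      (fun hp => h1 (by simpa using List.reverse_prefix.mp hp))
      (fun hp => h2 (by simpa using List.reverse_prefix.mp hp)) h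
  · intro h
    rw [← List.reverse_prefix, expand_reverse, expand_reverse] at h
    exact main_prefix _ hsf' Q.reverse F.reverse
      (fun hp => h2 (by simpa using List.reverse_prefix.mp hp))
      (fun hp => h1 (by simpa using List.reverse_prefix.mp hp)) h
end

section
/- Let e : V → Σ* be an injective map such that for any two distinct X, Y ∈ V, e(X) is not a suffix of e(Y). Let u, v ∈ V* be sequences of lengths p and q that share a common suffix of exactly l symbols over V, i.e., u[p−l+1..p] = v[q−l+1..q] and both u[p−l] and v[q−l] exist with u[p−l] ≠ v[q−l]. Then lcs(e*(u), e*(v)) = |e*(u[p−l+1..p])| + lcs(e(u[p−l]), e(v[q−l])). -/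
/-- Length of the longest common prefix of two strings (lists). -/
def lcp {A : Type*} [DecidableEq A] : List A → List A → ℕ
  | a :: s, b :: t => if a = b then lcp s t + 1 else 0
  | _, _ => 0

/-- Length of the longest common suffix of two strings (lists). -/
def lcs {A : Type*} [DecidableEq A] (s t : List A) : ℕ := lcp s.reverse t.reverse

lemma lcp_append_same {A : Type*} [DecidableEq A] (c s t : List A) :
    lcp (c ++ s) (c ++ t) = c.length + lcp s t := by
  induction c with
  | nil => simp
  | cons a c ih =>
    simp [lcp, ih]
    omega

lemma lcp_le_left {A : Type*} [DecidableEq A] : ∀ (s t : List A), lcp s t ≤ s.length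
  | [], t => by simp [lcp]
  | a :: s, [] => by simp [lcp]
  | a :: s, b :: t => by
    simp only [lcp, List.length_cons]
    split
    · have := lcp_le_left s t; omega
    · omega

lemma lcp_le_right {A : Type*} [DecidableEq A] : ∀ (s t : List A), lcp s t ≤ t.length
  | [], t => by simp [lcp]
  | a :: s, [] => by simp [lcp]
  | a :: s, b :: t => by
    simp only [lcp, List.length_cons]
    split
    · have := lcp_le_right s t; omega
    · omega

lemma lcp_eq_len {A : Type*} [DecidableEq A] :
    ∀ (s t : List A), lcp s t = s.length → s <+: t
  | [], t, _ => by simp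
  | a :: s, [], h => by simp [lcp] at h
  | a :: s, b :: t, h => by
    simp only [lcp, List.length_cons] at h
    split at h
    · subst_vars
      simpa using lcp_eq_len s t (by omega)
    · omega

lemma lcp_eq_len_right {A : Type*} [DecidableEq A] :
    ∀ (s t : List A), lcp s t = t.length → t <+: s
  | s, [], _ => by simp
  | [], b :: t, h => by simp [lcp] at h
  | a :: s, b :: t, h => by
    simp only [lcp, List.length_cons] at h
    split at h
    · subst_vars
      simpa using lcp_eq_len_right s t (by omega)
    · omega

lemma lcp_append_lt {A : Type*} [DecidableEq A] :
    ∀ (x y r s : List A), lcp x y < x.length → lcp x y < y.length →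
      lcp (x ++ r) (y ++ s) = lcp x y
  | [], y, r, s, hx, hy => by simp at hx
  | a :: x, [], r, s, hx, hy => by simp at hy
  | a :: x, b :: y, r, s, hx, hy => by
    simp only [lcp, List.length_cons] at hx hy
    by_cases hab : a = b
    · rw [if_pos hab] at hx hy
      simp only [List.cons_append, lcp, List.append_eq, if_pos hab]
      rw [lcp_append_lt x y r s (by omega) (by omega)]
    · simp [List.cons_append, lcp, hab]

/-- if the images of the injective map `e` are mutually non-suffix, and
`u, v` (of lengths `p, q`) share a common suffix of exactly `l` symbols (1-indexed
symbols `u[p-l] = X` and `v[q-l] = Y` exist and differ), then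
`lcs (e* u) (e* v) = |e* (u[p-l+1..p])| + lcs (e X) (e Y)`.
The suffix `u[p-l+1..p]` is `u.drop (p - l)` and the 1-indexed symbol `u[p-l]` is the
0-indexed lookup `u[p-l-1]?`. -/
theorem stmt_14 {V A : Type*} [DecidableEq V] [DecidableEq A]
    (e : V → List A) (he : Function.Injective e)
    (hsf : ∀ X Y : V, X ≠ Y → ¬ e X <:+ e Y)
    (u v : List V) (p q l : ℕ) (hp : p = u.length) (hq : q = v.length)
    (hlp : l < p) (hlq : l < q)
    (hsuf : u.drop (p - l) = v.drop (q - l))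
    (X Y : V) (hX : u[p - l - 1]? = some X) (hY : v[q - l - 1]? = some Y) (hXY : X ≠ Y) :
    lcs (expand e u) (expand e v) = (expand e (u.drop (p - l))).length + lcs (e X) (e Y) := by
  set k := p - l - 1 with hkdef
  set m := q - l - 1 with hmdef
  have hku : k < u.length := (List.getElem?_eq_some_iff.mp hX).1
  have hmv : m < v.length := (List.getElem?_eq_some_iff.mp hY).1
  have hXv : u[k] = X := (List.getElem?_eq_some_iff.mp hX).2
  have hYv : v[m] = Y := (List.getElem?_eq_some_iff.mp hY).2
  have hk1 : k + 1 = p - l := by omega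
  have hm1 : m + 1 = q - l := by omega
  set w := u.drop (p - l) with hw
  have hu : u = u.take k ++ X :: w := by
    conv_lhs => rw [← List.take_append_drop k u]
    rw [List.drop_eq_getElem_cons hku, hXv, hk1]
  have hv : v = v.take m ++ Y :: w := by
    conv_lhs => rw [← List.take_append_drop m v]
    rw [List.drop_eq_getElem_cons hmv, hYv, hm1, ← hsuf]
  have hexp : ∀ (a b : List V), expand e (a ++ b) = expand e a ++ expand e b := by
    intro a b; simp [expand]
  have hexpc : ∀ (Z : V) (b : List V), expand e (Z :: b) = e Z ++ expand e b := by
    intro Z b; simp [expand]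
  have hx : lcp (e X).reverse (e Y).reverse < (e X).reverse.length := by
    rcases lt_or_eq_of_le (lcp_le_left (e X).reverse (e Y).reverse) with h | h
    · exact h
    · exact absurd (List.reverse_prefix.mp (lcp_eq_len _ _ h)) (hsf X Y hXY)
  have hy : lcp (e X).reverse (e Y).reverse < (e Y).reverse.length := by
    rcases lt_or_eq_of_le (lcp_le_right (e X).reverse (e Y).reverse) with h | h
    · exact h
    · exact absurd (List.reverse_prefix.mp (lcp_eq_len_right _ _ h)) (hsf Y X hXY.symm)
  calc lcs (expand e u) (expand e v)
      = lcp ((expand e w).reverse ++ ((e X).reverse ++ (expand e (u.take k)).reverse))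
            ((expand e w).reverse ++ ((e Y).reverse ++ (expand e (v.take m)).reverse)) := by
        rw [lcs]
        conv_lhs => rw [hu, hv]
        rw [hexp, hexp, hexpc, hexpc]
        simp [List.reverse_append]
    _ = (expand e w).reverse.length + lcp ((e X).reverse ++ (expand e (u.take k)).reverse)
            ((e Y).reverse ++ (expand e (v.take m)).reverse) := lcp_append_same _ _ _
    _ = (expand e w).length + lcs (e X) (e Y) := by
        rw [lcp_append_lt _ _ _ _ hx hy, List.length_reverse, lcs]
end
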